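/- arXiv:1707.03034 — 3 statements merged into one kernel-verified Lean document; each statement's English description precedes it below -/
import Mathlib

section
/- Consider best-first search on a finite directed graph from start s to goal g that maintains an open list O (initialized to {s}) and a closed list C, and at each step expands a vertex of O minimizing the true cost-to-go Q* (moving it to C and adding its successors not in C ∪ O to O). If Q*(s) < ∞, then the search adds g to the open list after expanding at most Q*(s) vertices, each lying on some shortest path from s to g. -/
/-!
With the true cost-to-go as heuristic, the open list after `t` expansions always contains a
vertex at depth `t` on a shortest `s`-`g` path, and no closed vertex has depth `≥ t`. The vertex
minimising `Q*` is then itself on a shortest path at depth `t`; its successor on that path has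
depth `t + 1`, so it is neither closed nor the vertex just expanded, and the open list after
the expansion contains it. A frontier vertex at depth `Q*(s)` on a shortest path is `g`.
-/

/-- `Steps E n a b` : there is a path of exactly `n` edges from `a` to `b`. -/
def Steps {V : Type*} (E : V → V → Prop) : ℕ → V → V → Prop
  | 0, a, b => a = b
  | n + 1, a, b => ∃ c, E a c ∧ Steps E n c b

/-- shortest-path distance (number of edges) from `a` to `b`, `⊤` if unreachable. -/
noncomputable def SPDist {V : Type*} (E : V → V → Prop) (a b : V) : ℕ∞ :=
  sInf {m : ℕ∞ | ∃ n : ℕ, Steps E n a b ∧ m = (n : ℕ∞)}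

section ShortestPaths

variable {V : Type*} {E : V → V → Prop}

theorem Steps.trans {m k : ℕ} {a b c : V} (hab : Steps E m a b) (hbc : Steps E k b c) :
    Steps E (m + k) a c := by
  induction m generalizing a with
  | zero => cases hab; simpa using hbc
  | succ m ih =>
    obtain ⟨d, had, hdb⟩ := hab
    rw [Nat.add_right_comm]
    exact ⟨d, had, ih hdb⟩

theorem spDist_le_of_steps {k : ℕ} {a b : V} (h : Steps E k a b) : SPDist E a b ≤ k :=
  sInf_le ⟨k, h, rfl⟩

theorem steps_of_spDist_eq {k : ℕ} {a b : V} (h : SPDist E a b = k) : Steps E k a b := by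
  have hne : {m : ℕ∞ | ∃ n : ℕ, Steps E n a b ∧ m = (n : ℕ∞)}.Nonempty := by
    by_contra hempty
    rw [SPDist, Set.not_nonempty_iff_eq_empty.mp hempty, sInf_empty] at h
    exact ENat.top_ne_natCast k h
  obtain ⟨m, hm, hmk⟩ := csInf_mem hne
  rw [← SPDist, h, Nat.cast_inj] at hmk
  exact hmk ▸ hm

theorem spDist_self (a : V) : SPDist E a a = 0 :=
  nonpos_iff_eq_zero.mp (spDist_le_of_steps (k := 0) rfl)

theorem eq_of_spDist_eq_zero {a b : V} (h : SPDist E a b = 0) : a = b :=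
  steps_of_spDist_eq (k := 0) h

theorem spDist_triangle (a b c : V) : SPDist E a c ≤ SPDist E a b + SPDist E b c := by
  cases hab : SPDist E a b with
  | top => simp
  | coe m =>
    cases hbc : SPDist E b c with
    | top => simp
    | coe k =>
      exact_mod_cast spDist_le_of_steps ((steps_of_spDist_eq hab).trans (steps_of_spDist_eq hbc))

theorem spDist_le_add_one_of_adj {a b c : V} (hbc : E b c) : SPDist E a c ≤ SPDist E a b + 1 :=
  (spDist_triangle a b c).trans (by gcongr; exact spDist_le_of_steps (k := 1) ⟨c, hbc, rfl⟩)

theorem exists_adj_spDist_eq {k : ℕ} {a b : V} (h : SPDist E a b = (k + 1 : ℕ)) :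
    ∃ c, E a c ∧ SPDist E c b = k := by
  obtain ⟨c, hac, hcb⟩ := steps_of_spDist_eq h
  refine ⟨c, hac, le_antisymm (spDist_le_of_steps hcb) ?_⟩
  have hle : SPDist E c b ≤ k := spDist_le_of_steps hcb
  have htri : SPDist E a b ≤ 1 + SPDist E c b :=
    (spDist_triangle a c b).trans (by gcongr; exact spDist_le_of_steps (k := 1) ⟨c, hac, rfl⟩)
  lift SPDist E c b to ℕ using ne_top_of_le_ne_top (ENat.natCast_ne_top k) hle with d
  rw [h] at htri
  norm_cast at htri ⊢
  omega

def OnShortestPath (E : V → V → Prop) (s g v : V) : Prop :=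
  SPDist E s v + SPDist E v g = SPDist E s g

theorem onShortestPath_start (E : V → V → Prop) (s g : V) : OnShortestPath E s g s := by
  rw [OnShortestPath, spDist_self, zero_add]

theorem OnShortestPath.of_spDist_le {s g v x : V} (hv : OnShortestPath E s g v)
    (hfin : SPDist E s g ≠ ⊤) (hs : SPDist E s x ≤ SPDist E s v)
    (hg : SPDist E x g ≤ SPDist E v g) :
    OnShortestPath E s g x ∧ SPDist E s x = SPDist E s v := by
  have htri := spDist_triangle (E := E) s x g
  unfold OnShortestPath at hv ⊢
  rw [← hv] at hfin htri ⊢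
  obtain ⟨hsv, hvg⟩ := WithTop.add_ne_top.mp hfin
  lift SPDist E s x to ℕ using ne_top_of_le_ne_top hsv hs with a
  lift SPDist E x g to ℕ using ne_top_of_le_ne_top hvg hg with b
  lift SPDist E s v to ℕ using hsv with a'
  lift SPDist E v g to ℕ using hvg with b'
  norm_cast at hs hg htri ⊢
  omega

theorem OnShortestPath.exists_adj {s g x : V} (hx : OnShortestPath E s g x)
    (hfin : SPDist E s g ≠ ⊤) (hxg : x ≠ g) :
    ∃ c, E x c ∧ SPDist E s c = SPDist E s x + 1 ∧ OnShortestPath E s g c := by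
  unfold OnShortestPath at hx ⊢
  rw [← hx] at hfin
  obtain ⟨hsx, hxg_fin⟩ := WithTop.add_ne_top.mp hfin
  obtain ⟨k, hk⟩ := ENat.ne_top_iff_exists.mp hxg_fin
  obtain _ | k := k
  · exact absurd (eq_of_spDist_eq_zero (by exact_mod_cast hk.symm)) hxg
  obtain ⟨c, hxc, hcg⟩ := exists_adj_spDist_eq hk.symm
  have hsc := spDist_le_add_one_of_adj (a := s) hxc
  have htri := spDist_triangle (E := E) s c g
  refine ⟨c, hxc, ?_⟩
  rw [hcg, ← hx, ← hk] at htri ⊢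
  lift SPDist E s x to ℕ using hsx with a
  lift SPDist E s c to ℕ using ne_top_of_le_ne_top (by simp) hsc with b
  norm_cast at hsc htri ⊢
  omega

end ShortestPaths

section BestFirstSearch

variable {V : Type*} {E : V → V → Prop} {s g : V}

/-- `t` is the number of expansions performed so far. -/
structure SearchInvariant (E : V → V → Prop) (s g : V) (O C : Finset V) (t : ℕ) : Prop where
  open_le : ∀ v ∈ O, SPDist E s v ≤ t
  closed_lt : ∀ v ∈ C, SPDist E s v < t
  frontier : ∃ v ∈ O, SPDist E s v = t ∧ OnShortestPath E s g v

theorem searchInvariant_start : SearchInvariant E s g {s} ∅ 0 where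
  open_le v hv := by rw [Finset.mem_singleton.mp hv, spDist_self]; rfl
  closed_lt v hv := absurd hv (Finset.notMem_empty v)
  frontier := ⟨s, Finset.mem_singleton_self s, spDist_self s, onShortestPath_start E s g⟩

theorem SearchInvariant.le_spDist {O C : Finset V} {t : ℕ} (hI : SearchInvariant E s g O C t) :
    (t : ℕ∞) ≤ SPDist E s g := by
  obtain ⟨v, -, hvt, hv⟩ := hI.frontier
  rw [← hv, ← hvt]
  exact le_self_add

theorem SearchInvariant.expand [Fintype V] [DecidableEq V] [DecidableRel E]
    {O C : Finset V} {t : ℕ} {x : V}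
    (hI : SearchInvariant E s g O C t) (hfin : SPDist E s g ≠ ⊤) (hg : g ∉ O) (hx : x ∈ O)
    (hmin : ∀ v ∈ O, SPDist E x g ≤ SPDist E v g) :
    OnShortestPath E s g x ∧
      SearchInvariant E s g (O.erase x ∪ Finset.univ.filter fun u => E x u ∧ u ∉ O ∧ u ∉ C)
        (insert x C) (t + 1) := by
  obtain ⟨v, hvO, hvt, hv⟩ := hI.frontier
  obtain ⟨hx_path, hxt⟩ :=
    hv.of_spDist_le hfin ((hI.open_le x hx).trans hvt.ge) (hmin v hvO)
  rw [hvt] at hxt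
  obtain ⟨c, hxc, hct, hc⟩ := hx_path.exists_adj hfin (ne_of_mem_of_not_mem hx hg)
  rw [hxt] at hct
  have ht_lt : (t : ℕ∞) < (t + 1 : ℕ) := by exact_mod_cast t.lt_succ_self
  refine ⟨hx_path, ⟨?_, ?_, c, ?_, by exact_mod_cast hct, hc⟩⟩
  · intro u hu
    simp only [Finset.mem_union, Finset.mem_erase, Finset.mem_filter, Finset.mem_univ,
      true_and] at hu
    rcases hu with ⟨-, hu⟩ | ⟨hxu, -, -⟩
    · exact (hI.open_le u hu).trans ht_lt.le
    · exact (spDist_le_add_one_of_adj hxu).trans (by rw [hxt]; push_cast; rfl)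
  · intro u hu
    rcases Finset.mem_insert.mp hu with rfl | hu
    · exact hxt ▸ ht_lt
    · exact (hI.closed_lt u hu).trans ht_lt
  · have hcx : c ≠ x := by
      rintro rfl
      exact absurd (hct.symm.trans hxt) (by norm_cast; omega)
    by_cases hcO : c ∈ O
    · exact Finset.mem_union_left _ (Finset.mem_erase.mpr ⟨hcx, hcO⟩)
    · refine Finset.mem_union_right _ (Finset.mem_filter.mpr ⟨Finset.mem_univ c, hxc, hcO, ?_⟩)
      intro hcC
      have := hI.closed_lt c hcC
      rw [hct] at this
      exact absurd this (not_lt.mpr le_self_add)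

theorem searchInvariant_of_forall_lt_notMem [Fintype V] [DecidableEq V] [DecidableRel E]
    {O C : ℕ → Finset V} {ex : ℕ → V} (hfin : SPDist E s g ≠ ⊤)
    (hO0 : O 0 = {s}) (hC0 : C 0 = ∅)
    (hstep : ∀ t, g ∉ O t → (O t).Nonempty →
      ex t ∈ O t ∧ (∀ v ∈ O t, SPDist E (ex t) g ≤ SPDist E v g) ∧
      C (t + 1) = insert (ex t) (C t) ∧
      O (t + 1) = ((O t).erase (ex t)) ∪
        (Finset.univ.filter fun u => E (ex t) u ∧ u ∉ O t ∧ u ∉ C t))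
    (t : ℕ) (hg : ∀ i < t, g ∉ O i) :
    SearchInvariant E s g (O t) (C t) t ∧ ∀ i < t, OnShortestPath E s g (ex i) := by
  induction t with
  | zero => exact ⟨hO0 ▸ hC0 ▸ searchInvariant_start, by simp⟩
  | succ t ih =>
    obtain ⟨hI, hpath⟩ := ih fun i hi => hg i (by omega)
    have hgt : g ∉ O t := hg t t.lt_succ_self
    obtain ⟨v, hv, -⟩ := hI.frontier
    obtain ⟨hx, hmin, hC, hO⟩ := hstep t hgt ⟨v, hv⟩
    obtain ⟨hx_path, hI'⟩ := hI.expand hfin hgt hx hmin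
    refine ⟨hO ▸ hC ▸ hI', fun i hi => ?_⟩
    rcases Nat.lt_succ_iff_lt_or_eq.mp hi with hi | rfl
    exacts [hpath i hi, hx_path]

end BestFirstSearch

/-- Best-first search guided by the true cost-to-go `Q*` adds the goal to the open list
after at most `Q*(s)` expansions, each expanded vertex lying on a shortest `s`-`g` path. -/
theorem bestfirst_with_true_cost_to_go {V : Type*} [Fintype V] [DecidableEq V]
    (E : V → V → Prop) [DecidableRel E] (s g : V)
    (O C : ℕ → Finset V) (ex : ℕ → V)
    (hO0 : O 0 = {s}) (hC0 : C 0 = ∅)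
    (hstep : ∀ t, g ∉ O t → (O t).Nonempty →
      ex t ∈ O t ∧ (∀ v ∈ O t, SPDist E (ex t) g ≤ SPDist E v g) ∧
      C (t + 1) = insert (ex t) (C t) ∧
      O (t + 1) = ((O t).erase (ex t)) ∪
        (Finset.univ.filter fun u => E (ex t) u ∧ u ∉ O t ∧ u ∉ C t))
    (n : ℕ) (hreach : SPDist E s g = (n : ℕ∞)) :
    ∃ t ≤ n, g ∈ O t ∧
      ∀ i < t, SPDist E s (ex i) + SPDist E (ex i) g = SPDist E s g := by
  have hfin : SPDist E s g ≠ ⊤ := hreach ▸ ENat.natCast_ne_top n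
  have hinv := searchInvariant_of_forall_lt_notMem hfin hO0 hC0 hstep
  have hbound : ∀ t, (∀ i < t, g ∉ O i) → t ≤ n := fun t ht => by
    exact_mod_cast hreach ▸ (hinv t ht).1.le_spDist
  have hreached : ∃ t, g ∈ O t := by
    by_contra! hnever
    exact absurd (hbound (n + 1) fun i _ => hnever i) (by omega)
  have hfirst : ∀ i < Nat.find hreached, g ∉ O i := fun i hi => Nat.find_min hreached hi
  exact ⟨Nat.find hreached, hbound _ hfirst, Nat.find_spec hreached, (hinv _ hfirst).2⟩
end

section
/- Let π be a policy and π* an oracle policy for a finite-horizon MDP with horizon T, and suppose that for every t and every state s in the support of d_π^t, Q^{π*}(s, π(s)) − min_a Q^{π*}(s, a) ≤ ε. If one-step costs are nonnegative and π* is an optimal policy, then J(π) ≤ J(π*) + εT. -/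
/-- If along its own state distribution a policy `π` is `ε`-suboptimal in the one-step
cost-to-go of an optimal oracle `π*`, then `J(π) ≤ J(π*) + εT`. -/
theorem imitation_regret_bound
    {S A : Type*} [Fintype S] [Fintype A] [Nonempty A] (T : ℕ) (ε : ℝ)
    (c : S → A → ℝ) (P : S → A → S → ℝ) (ρ : S → ℝ) (π πstar : S → A)
    (hc0 : ∀ s a, 0 ≤ c s a)
    (hP0 : ∀ s a s', 0 ≤ P s a s') (hP1 : ∀ s a, ∑ s', P s a s' = 1)
    (hρ0 : ∀ s, 0 ≤ ρ s) (hρ1 : ∑ s, ρ s = 1)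
    (d : ℕ → S → ℝ) (hd1 : ∀ s, d 1 s = ρ s)
    (hd : ∀ t, 1 ≤ t → ∀ s', d (t + 1) s' = ∑ s, d t s * P s (π s) s')
    (Q : (S → A) → ℕ → S → A → ℝ)
    (hQ0 : ∀ σ s a, Q σ 0 s a = 0)
    (hQ : ∀ σ k s a, Q σ (k + 1) s a = c s a + ∑ s', P s a s' * Q σ k s' (σ s'))
    (J : (S → A) → ℝ) (hJ : ∀ σ, J σ = ∑ s, ρ s * Q σ T s (σ s))
    -- π* is optimal: it attains the minimum of its own cost-to-go at every state
    (hopt : ∀ k s a, Q πstar k s (πstar s) ≤ Q πstar k s a)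
    -- ε-suboptimality of π on the support of its own state distribution
    (hsub : ∀ t ∈ Finset.Icc 1 T, ∀ s, d t s ≠ 0 →
      Q πstar (T - t + 1) s (π s) -
        Finset.univ.inf' Finset.univ_nonempty (fun a => Q πstar (T - t + 1) s a) ≤ ε) :
    J π ≤ J πstar + ε * T := by
  -- nonnegativity of the state distribution
  have hdnn0 : ∀ n : ℕ, ∀ s, 0 ≤ d (n + 1) s := by
    intro n
    induction n with
    | zero => intro s; rw [hd1]; exact hρ0 s
    | succ m ih =>
      intro s
      rw [hd (m + 1) (by omega)]
      exact Finset.sum_nonneg fun x _ => mul_nonneg (ih x) (hP0 _ _ _)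
  have hdnn : ∀ t : ℕ, 1 ≤ t → ∀ s, 0 ≤ d t s := by
    intro t ht s
    obtain ⟨n, rfl⟩ : ∃ n, t = n + 1 := ⟨t - 1, by omega⟩
    exact hdnn0 n s
  -- the state distribution sums to 1
  have hdsum0 : ∀ n : ℕ, ∑ s, d (n + 1) s = 1 := by
    intro n
    induction n with
    | zero => simp only [hd1]; exact hρ1
    | succ m ih =>
      calc ∑ s', d (m + 1 + 1) s' = ∑ s', ∑ s, d (m + 1) s * P s (π s) s' :=
            Finset.sum_congr rfl fun s' _ => hd (m + 1) (by omega) s'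
        _ = ∑ s, d (m + 1) s * ∑ s', P s (π s) s' := by
            rw [Finset.sum_comm]
            exact Finset.sum_congr rfl fun s _ => (Finset.mul_sum _ _ _).symm
        _ = 1 := by simp only [hP1, mul_one]; exact ih
  have hdsum : ∀ t : ℕ, 1 ≤ t → ∑ s, d t s = 1 := by
    intro t ht
    obtain ⟨n, rfl⟩ : ∃ n, t = n + 1 := ⟨t - 1, by omega⟩
    exact hdsum0 n
  -- the key telescoping inequality
  have key : ∀ k t : ℕ, 1 ≤ t → t + k = T + 1 →
      ∑ s, d t s * Q π k s (π s) ≤ ∑ s, d t s * Q πstar k s (πstar s) + ε * k := by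
    intro k
    induction k with
    | zero => intro t ht he; simp [hQ0]
    | succ m ih =>
      intro t ht he
      have htT : t ≤ T := by omega
      have hTt : T - t + 1 = m + 1 := by omega
      -- one-step expansion for both Q-functions along π's actions
      have step : ∀ σ : S → A,
          ∑ s, d t s * Q σ (m + 1) s (π s)
            = ∑ s, d t s * c s (π s) + ∑ s', d (t + 1) s' * Q σ m s' (σ s') := by
        intro σ
        calc ∑ s, d t s * Q σ (m + 1) s (π s)
            = ∑ s, (d t s * c s (π s)
                + ∑ s', d t s * P s (π s) s' * Q σ m s' (σ s')) := by
              refine Finset.sum_congr rfl fun s _ => ?_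
              rw [hQ, mul_add, Finset.mul_sum]
              ring_nf
          _ = ∑ s, d t s * c s (π s)
                + ∑ s', (∑ s, d t s * P s (π s) s') * Q σ m s' (σ s') := by
              rw [Finset.sum_add_distrib, Finset.sum_comm]
              exact congrArg _ (Finset.sum_congr rfl fun s' _ =>
                (Finset.sum_mul _ _ _).symm)
          _ = ∑ s, d t s * c s (π s) + ∑ s', d (t + 1) s' * Q σ m s' (σ s') := by
              exact congrArg _ (Finset.sum_congr rfl fun s' _ => by
                rw [hd t ht s'])
      -- the per-state ε bound at time t
      have hpt : ∑ s, d t s * Q πstar (m + 1) s (π s)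
          ≤ ∑ s, d t s * Q πstar (m + 1) s (πstar s) + ε := by
        have hsum : ∑ s, d t s * Q πstar (m + 1) s (π s)
            ≤ ∑ s, (d t s * Q πstar (m + 1) s (πstar s) + d t s * ε) := by
          refine Finset.sum_le_sum fun s _ => ?_
          by_cases h0 : d t s = 0
          · simp [h0]
          · have hgap : Q πstar (m + 1) s (π s) - Q πstar (m + 1) s (πstar s) ≤ ε := by
              have hinf : (Finset.univ.inf' Finset.univ_nonempty
                  (fun a => Q πstar (m + 1) s a)) = Q πstar (m + 1) s (πstar s) := by
                apply le_antisymm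
                · exact Finset.inf'_le _ (Finset.mem_univ _)
                · exact Finset.le_inf' _ _ fun a _ => hopt (m + 1) s a
              have := hsub t (Finset.mem_Icc.mpr ⟨ht, htT⟩) s h0
              rw [hTt, hinf] at this
              exact this
            have hd0 : 0 ≤ d t s := hdnn t ht s
            nlinarith [hd0, hgap]
        calc ∑ s, d t s * Q πstar (m + 1) s (π s)
            ≤ ∑ s, (d t s * Q πstar (m + 1) s (πstar s) + d t s * ε) := hsum
          _ = ∑ s, d t s * Q πstar (m + 1) s (πstar s) + (∑ s, d t s) * ε := by
              rw [Finset.sum_add_distrib, Finset.sum_mul]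
          _ = ∑ s, d t s * Q πstar (m + 1) s (πstar s) + ε := by
              rw [hdsum t ht, one_mul]
      have hih := ih (t + 1) (by omega) (by omega)
      calc ∑ s, d t s * Q π (m + 1) s (π s)
          = ∑ s, d t s * c s (π s) + ∑ s', d (t + 1) s' * Q π m s' (π s') := step π
        _ ≤ ∑ s, d t s * c s (π s)
              + (∑ s', d (t + 1) s' * Q πstar m s' (πstar s') + ε * m) := by
            linarith [hih]
        _ = ∑ s, d t s * Q πstar (m + 1) s (π s) + ε * m := by
            rw [step πstar]; ring
        _ ≤ ∑ s, d t s * Q πstar (m + 1) s (πstar s) + ε + ε * m := by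
            linarith [hpt]
        _ = ∑ s, d t s * Q πstar (m + 1) s (πstar s) + ε * (m + 1 : ℕ) := by
            push_cast; ring
  have hmain := key T 1 le_rfl (by omega)
  simp only [hd1] at hmain
  rw [hJ π, hJ πstar]
  exact hmain
end

section
/- With the same setup, for a distribution over states where each state has at most |A| actions and the regression errors satisfy E_{(s,a)}[(Q_θ(s,a) − Q*(s,a))²] ≤ ε where (s, a) is drawn by sampling s and then a uniformly from A(s), the expected classification regret satisfies E_s[Q*(s, â_s) − min_a Q*(s, a)] ≤ 2√(|A| ε). -/
/-!
If `â` minimises `Qθ s` and `b` minimises `Q* s`, then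
`Q* s â - Q* s b ≤ (Qθ s b - Q* s b) - (Qθ s â - Q* s â)`, so the squared regret at `s` is at
most `4 ∑ₐ (Qθ s a - Q* s a)² ≤ 4 K · mse(s)`. Averaging over `s` and applying Jensen's
inequality to `x ↦ x²` bounds the squared expected regret by `4 K ε`.
-/

open Finset

theorem sq_sub_inf'_le_four_mul_sum_sq {ι : Type*} (s : Finset ι) (hs : s.Nonempty)
    (f g : ι → ℝ) {a : ι} (ha : a ∈ s) (hmin : ∀ b ∈ s, g a ≤ g b) :
    (f a - s.inf' hs f) ^ 2 ≤ 4 * ∑ b ∈ s, (g b - f b) ^ 2 := by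
  obtain ⟨b, hb, hinf⟩ := s.exists_mem_eq_inf' hs f
  have hsq_le_sum : ∀ c ∈ s, (g c - f c) ^ 2 ≤ ∑ b ∈ s, (g b - f b) ^ 2 := fun c hc =>
    single_le_sum (f := fun b => (g b - f b) ^ 2) (fun _ _ => sq_nonneg _) hc
  have hregret_nonneg : 0 ≤ f a - f b := sub_nonneg.2 (hinf ▸ s.inf'_le f ha)
  have hregret_le : f a - f b ≤ (g b - f b) - (g a - f a) := by linarith [hmin b hb]
  rw [hinf]
  calc (f a - f b) ^ 2 ≤ ((g b - f b) - (g a - f a)) ^ 2 :=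
        pow_le_pow_left₀ hregret_nonneg hregret_le 2
    _ ≤ 2 * ((g a - f a) ^ 2 + (g b - f b) ^ 2) := by
        nlinarith [sq_nonneg ((g b - f b) + (g a - f a))]
    _ ≤ 4 * ∑ b ∈ s, (g b - f b) ^ 2 := by linarith [hsq_le_sum a ha, hsq_le_sum b hb]

theorem sq_sum_mul_le_sum_mul_sq {ι : Type*} (t : Finset ι) (w r : ι → ℝ)
    (hw0 : ∀ i ∈ t, 0 ≤ w i) (hw1 : ∑ i ∈ t, w i = 1) :
    (∑ i ∈ t, w i * r i) ^ 2 ≤ ∑ i ∈ t, w i * r i ^ 2 := by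
  simpa only [smul_eq_mul] using
    (even_two.convexOn_pow (𝕜 := ℝ)).map_sum_le hw0 hw1 (fun i _ => Set.mem_univ (r i))

theorem le_two_mul_sqrt_of_sq_le_four_mul {x y : ℝ} (h : x ^ 2 ≤ 4 * y) : x ≤ 2 * √y := by
  have h2 : 2 * √y = √(4 * y) := by
    rw [Real.sqrt_mul zero_le_four, show (4 : ℝ) = 2 ^ 2 by norm_num, Real.sqrt_sq zero_le_two]
  exact h2 ▸ (le_abs_self x).trans (Real.abs_le_sqrt h)

theorem sum_le_mul_inv_card_mul_sum {ι : Type*} (s : Finset ι) (hs : s.Nonempty) (K : ℕ)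
    (hcard : s.card ≤ K) (e : ι → ℝ) (he : ∀ i ∈ s, 0 ≤ e i) :
    ∑ i ∈ s, e i ≤ K * ((s.card : ℝ)⁻¹ * ∑ i ∈ s, e i) := by
  have hcard_pos : (0 : ℝ) < s.card := by exact_mod_cast hs.card_pos
  rw [← mul_assoc]
  refine le_mul_of_one_le_left (sum_nonneg he) ?_
  rw [← div_eq_mul_inv, one_le_div hcard_pos]
  exact_mod_cast hcard

/-- Reduction of expected classification regret to expected squared regression error:
if the mean squared error under uniform action sampling is at most `ε` and every action
set has at most `K` actions, the expected regret is at most `2√(Kε)`. -/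
theorem expected_regret_le_sqrt_regression_error
    {S α : Type*} [Fintype S] (K : ℕ) (ε : ℝ)
    (w : S → ℝ) (hw0 : ∀ s, 0 ≤ w s) (hw1 : ∑ s, w s = 1)
    (A : S → Finset α) (hne : ∀ s, (A s).Nonempty) (hcard : ∀ s, (A s).card ≤ K)
    (Qθ Qstar : S → α → ℝ)
    (ahat : S → α) (hmem : ∀ s, ahat s ∈ A s)
    (hmin : ∀ s, ∀ a ∈ A s, Qθ s (ahat s) ≤ Qθ s a)
    (hreg : ∑ s, w s * (((A s).card : ℝ)⁻¹ *
      ∑ a ∈ A s, (Qθ s a - Qstar s a) ^ 2) ≤ ε) :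
    ∑ s, w s * (Qstar s (ahat s) - (A s).inf' (hne s) (Qstar s))
      ≤ 2 * Real.sqrt (K * ε) := by
  set mse : S → ℝ := fun s => ((A s).card : ℝ)⁻¹ * ∑ a ∈ A s, (Qθ s a - Qstar s a) ^ 2
  have hpointwise : ∀ s, (Qstar s (ahat s) - (A s).inf' (hne s) (Qstar s)) ^ 2
      ≤ 4 * (K * mse s) := fun s =>
    (sq_sub_inf'_le_four_mul_sum_sq _ _ _ _ (hmem s) (hmin s)).trans <|
      mul_le_mul_of_nonneg_left
        (sum_le_mul_inv_card_mul_sum _ (hne s) K (hcard s) _ fun _ _ => sq_nonneg _)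
        zero_le_four
  refine le_two_mul_sqrt_of_sq_le_four_mul ?_
  calc (∑ s, w s * (Qstar s (ahat s) - (A s).inf' (hne s) (Qstar s))) ^ 2
      ≤ ∑ s, w s * (Qstar s (ahat s) - (A s).inf' (hne s) (Qstar s)) ^ 2 :=
        sq_sum_mul_le_sum_mul_sq _ _ _ (fun s _ => hw0 s) hw1
    _ ≤ ∑ s, w s * (4 * (K * mse s)) :=
        sum_le_sum fun s _ => mul_le_mul_of_nonneg_left (hpointwise s) (hw0 s)
    _ = 4 * (K * ∑ s, w s * mse s) := by
        simp only [mul_sum]; exact sum_congr rfl fun s _ => by ring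
    _ ≤ 4 * (K * ε) := by gcongr
end
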